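/- Under the hypotheses that (X,Y) has joint density f_{XY}, survival function S_{XY}, and that ∂S_{XY}/∂y(x,y) = −∫_x^∞ f_{XY}(u,y) du holds with suitable integrability, one has P(t < X < Y < ∞) = S_{XY}(t,t) + ∫_t^∞ [∂/∂y S_{XY}(x,y)]_{x=y} dy for every t. -/
import Mathlib


open MeasureTheory

theorem prob_t_lt_X_lt_Y_eq_survival_add_integral_of_partial
    {Ω : Type*} [MeasurableSpace Ω] (P : Measure Ω) [IsProbabilityMeasure P]
    (X Y : Ω → ℝ) (hX : Measurable X) (hY : Measurable Y)
    (f : ℝ × ℝ → ℝ) (hf0 : ∀ p, 0 ≤ f p)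
    (hfint : Integrable f (volume : Measure (ℝ × ℝ)))
    (hdens : ∀ s : Set (ℝ × ℝ), MeasurableSet s →
      (P {ω | (X ω, Y ω) ∈ s}).toReal = ∫ p in s, f p)
    (S : ℝ → ℝ → ℝ)
    (hS : ∀ x y, S x y = (P {ω | x < X ω ∧ y < Y ω}).toReal)
    (D : ℝ → ℝ → ℝ)
    (hD : ∀ x y, HasDerivAt (fun y' => S x y') (D x y) y)
    (hDval : ∀ x y, D x y = -(∫ u in Set.Ioi x, f (u, y)))
    (t : ℝ)
    (hDint : IntegrableOn (fun y => D y y) (Set.Ioi t)) :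
    (P {ω | t < X ω ∧ X ω < Y ω}).toReal
      = S t t + ∫ y in Set.Ioi t, D y y := by
  set s1 : Set (ℝ × ℝ) := {p | t < p.1 ∧ p.1 < p.2} with hs1def
  set s2 : Set (ℝ × ℝ) := {p | t < p.1 ∧ t < p.2} with hs2def
  set s3 : Set (ℝ × ℝ) := {p | t < p.2 ∧ p.2 < p.1} with hs3def
  have hms1 : MeasurableSet s1 :=
    (measurableSet_lt measurable_const measurable_fst).inter
      (measurableSet_lt measurable_fst measurable_snd)
  have hms2 : MeasurableSet s2 :=
    (measurableSet_lt measurable_const measurable_fst).inter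
      (measurableSet_lt measurable_const measurable_snd)
  have hms3 : MeasurableSet s3 :=
    (measurableSet_lt measurable_const measurable_snd).inter
      (measurableSet_lt measurable_snd measurable_fst)
  -- LHS as a set integral
  have hL : (P {ω | t < X ω ∧ X ω < Y ω}).toReal = ∫ p in s1, f p := by
    have := hdens s1 hms1
    simpa [hs1def] using this
  -- S t t as a set integral
  have hStt : S t t = ∫ p in s2, f p := by
    rw [hS t t]
    have := hdens s2 hms2
    simpa [hs2def] using this
  -- Fubini for the set integral over s3
  have hFub : (∫ p in s3, f p) = ∫ y in Set.Ioi t, ∫ x in Set.Ioi y, f (x, y) := by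
    have hind : Integrable (s3.indicator f) ((volume : Measure ℝ).prod volume) := by
      rw [← Measure.volume_eq_prod]; exact hfint.indicator hms3
    calc (∫ p in s3, f p)
        = ∫ p, s3.indicator f p := (integral_indicator hms3).symm
      _ = ∫ p, s3.indicator f p ∂((volume : Measure ℝ).prod volume) := by
          rw [← Measure.volume_eq_prod]
      _ = ∫ y, (∫ x, s3.indicator f (x, y)) := integral_prod_symm _ hind
      _ = ∫ y, (Set.Ioi t).indicator (fun y => ∫ x in Set.Ioi y, f (x, y)) y := by
          congr 1
          ext y
          by_cases hy : t < y
          · rw [Set.indicator_of_mem (Set.mem_Ioi.mpr hy),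
              ← integral_indicator measurableSet_Ioi]
            congr 1
            ext x
            by_cases hx : y < x
            · rw [Set.indicator_of_mem (show (x, y) ∈ s3 from ⟨hy, hx⟩),
                Set.indicator_of_mem (Set.mem_Ioi.mpr hx)]
            · rw [Set.indicator_of_notMem (show (x, y) ∉ s3 from fun h => hx h.2),
                Set.indicator_of_notMem (fun h => hx (Set.mem_Ioi.mp h))]
          · rw [Set.indicator_of_notMem (fun h => hy (Set.mem_Ioi.mp h))]
            have hz : ∀ x : ℝ, s3.indicator f (x, y) = 0 := fun x =>
              Set.indicator_of_notMem (show (x, y) ∉ s3 from fun h => hy h.1) f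
            simp [hz]
      _ = ∫ y in Set.Ioi t, ∫ x in Set.Ioi y, f (x, y) :=
          integral_indicator measurableSet_Ioi
  -- the integral of D y y
  have hDInt : (∫ y in Set.Ioi t, D y y) = -∫ p in s3, f p := by
    have h1 : (∫ y in Set.Ioi t, D y y)
        = ∫ y in Set.Ioi t, -(∫ u in Set.Ioi y, f (u, y)) := by
      apply setIntegral_congr_fun measurableSet_Ioi
      intro y _
      exact hDval y y
    rw [h1, integral_neg, hFub]
  -- diagonal is null
  have hdiag : (volume : Measure (ℝ × ℝ)) {p : ℝ × ℝ | p.1 = p.2} = 0 := by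
    have hm : MeasurableSet {p : ℝ × ℝ | p.1 = p.2} :=
      measurableSet_eq_fun measurable_fst measurable_snd
    rw [Measure.volume_eq_prod, Measure.prod_apply hm]
    have hpre : ∀ x : ℝ, (Prod.mk x ⁻¹' {p : ℝ × ℝ | p.1 = p.2}) = {x} := by
      intro x; ext y; simp [eq_comm]
    simp [hpre]
  -- s2 =ᵐ s1 ∪ s3
  have hsubd : s2 \ (s1 ∪ s3) ⊆ {p : ℝ × ℝ | p.1 = p.2} := by
    rintro ⟨x, y⟩ ⟨⟨h1, h2⟩, h3⟩
    simp only [Set.mem_union, hs1def, hs3def, Set.mem_setOf_eq, not_or, not_and] at h3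
    show x = y
    exact le_antisymm (not_lt.mp (h3.2 h2)) (not_lt.mp (h3.1 h1))
  have haeeq : s2 =ᵐ[(volume : Measure (ℝ × ℝ))] ((s1 ∪ s3 : Set (ℝ × ℝ))) := by
    rw [MeasureTheory.ae_eq_set]
    constructor
    · exact measure_mono_null hsubd hdiag
    · have he : (s1 ∪ s3) \ s2 = ∅ := by
        rw [Set.diff_eq_empty]
        rintro ⟨x, y⟩ (⟨h1, h2⟩ | ⟨h1, h2⟩)
        · exact ⟨h1, h1.trans h2⟩
        · exact ⟨h1.trans h2, h1⟩
      rw [he]; simp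
  have hdisj : Disjoint s1 s3 := by
    rw [Set.disjoint_left]
    rintro ⟨x, y⟩ ⟨_, h2⟩ ⟨_, h4⟩
    exact absurd (h2.trans h4) (lt_irrefl _)
  have hsplit : (∫ p in s2, f p) = (∫ p in s1, f p) + ∫ p in s3, f p := by
    rw [setIntegral_congr_set haeeq]
    exact setIntegral_union hdisj hms3 hfint.integrableOn hfint.integrableOn
  rw [hL, hStt, hDInt, hsplit]
  ring
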